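/- Let (w*, b*, u*) be a P-stationary point with parameter γ > 0 and associated multiplier λ* ∈ ℝ^m, and define the index set T* = {i : 0 < u*_i − γλ*_i ≤ √(2γC)}. Then T* = {i : −√(2C/γ) ≤ λ*_i < 0}; in particular λ*_i ∈ [−√(2C/γ), 0) for i ∈ T* and λ*_i = 0 for i ∉ T*. -/

import Mathlib

open Finset

noncomputable def l01norm {m : ℕ} (v : Fin m → ℝ) : ℕ :=
  (Finset.univ.filter fun i => 0 < v i).card

/-- `(w, b, u)` is a P-stationary point with parameter `γ > 0` and multiplier
`lam` of the problem `min (1/2)‖w‖² + C‖u₊‖₀ s.t. u + Aw + by = 1`. -/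
def IsPStationary {m n : ℕ} (A : Matrix (Fin m) (Fin n) ℝ) (y : Fin m → ℝ)
    (C γ : ℝ) (w : Fin n → ℝ) (b : ℝ) (u : Fin m → ℝ) (lam : Fin m → ℝ) : Prop :=
  (∀ j, w j + ∑ i, A i j * lam i = 0) ∧
  (∑ i, y i * lam i = 0) ∧
  (∀ i, u i + A.mulVec w i + b * y i = 1) ∧
  (∀ i, (0 < u i - γ * lam i ∧ u i - γ * lam i ≤ Real.sqrt (2 * γ * C)) →
      u i = 0) ∧
  (∀ i, ¬(0 < u i - γ * lam i ∧ u i - γ * lam i ≤ Real.sqrt (2 * γ * C)) →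
      u i = u i - γ * lam i)

/-
On `T*` the proximal step sets `u*_i = 0`, so `z*_i = -γλ*_i ∈ (0, √(2γC)]`, i.e.
`λ*_i ∈ [-√(2γC)/γ, 0) = [-√(2C/γ), 0)`. Off `T*` it leaves `u*_i = z*_i = u*_i - γλ*_i`,
which forces `λ*_i = 0`. Since the two cases are exhaustive and `λ*_i < 0` on `T*`,
membership in `T*` is exactly `λ*_i ∈ [-√(2C/γ), 0)`.
-/

lemma sqrt_mul_div_self_eq {γ : ℝ} (hγ : 0 < γ) (a : ℝ) : √(γ * a) / γ = √(a / γ) := by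
  rw [show a / γ = γ * a / γ ^ 2 by field_simp, Real.sqrt_div' _ (by positivity),
    Real.sqrt_sq hγ.le]

lemma neg_sqrt_div_le_and_neg_of_mem_Ioc {γ a l : ℝ} (hγ : 0 < γ)
    (h : -(γ * l) ∈ Set.Ioc 0 √(γ * a)) :
    -√(a / γ) ≤ l ∧ l < 0 := by
  obtain ⟨hpos, hle⟩ := h
  refine ⟨?_, by nlinarith⟩
  rw [neg_le, ← sqrt_mul_div_self_eq hγ, le_div_iff₀ hγ]
  linarith

namespace IsPStationary

variable {m n : ℕ} {A : Matrix (Fin m) (Fin n) ℝ} {y : Fin m → ℝ} {C γ : ℝ}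
  {w : Fin n → ℝ} {b : ℝ} {u lam : Fin m → ℝ}

lemma multiplier_eq_zero (h : IsPStationary A y C γ w b u lam) (hγ : 0 < γ) {i : Fin m}
    (hi : ¬(0 < u i - γ * lam i ∧ u i - γ * lam i ≤ √(2 * γ * C))) : lam i = 0 := by
  have hu := h.2.2.2.2 i hi
  have : γ * lam i = 0 := by linarith
  exact (mul_eq_zero.1 this).resolve_left hγ.ne'

lemma multiplier_mem_of_prox_threshold (h : IsPStationary A y C γ w b u lam) (hγ : 0 < γ)
    {i : Fin m} (hi : 0 < u i - γ * lam i ∧ u i - γ * lam i ≤ √(2 * γ * C)) :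
    -√(2 * C / γ) ≤ lam i ∧ lam i < 0 := by
  obtain ⟨hpos, hle⟩ := hi
  have hu := h.2.2.2.1 i ⟨hpos, hle⟩
  rw [hu, zero_sub] at hpos hle
  rw [show 2 * γ * C = γ * (2 * C) by ring] at hle
  exact neg_sqrt_div_le_and_neg_of_mem_Ioc hγ ⟨hpos, hle⟩

lemma prox_threshold_iff (h : IsPStationary A y C γ w b u lam) (hγ : 0 < γ) (i : Fin m) :
    (0 < u i - γ * lam i ∧ u i - γ * lam i ≤ √(2 * γ * C)) ↔
      (-√(2 * C / γ) ≤ lam i ∧ lam i < 0) := by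
  refine ⟨h.multiplier_mem_of_prox_threshold hγ, fun ⟨_, hneg⟩ => ?_⟩
  by_contra hi
  exact hneg.ne (h.multiplier_eq_zero hγ hi)

end IsPStationary

theorem PStationary_Tstar_multiplier_characterization_general {m n : ℕ}
    (y : Fin m → ℝ)
    (A : Matrix (Fin m) (Fin n) ℝ)
    (C : ℝ) (γ : ℝ) (hγ : 0 < γ)
    (wstar : Fin n → ℝ) (bstar : ℝ) (ustar : Fin m → ℝ) (lam : Fin m → ℝ)
    (hstat : IsPStationary A y C γ wstar bstar ustar lam)
    (Tstar : Set (Fin m))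
    (hT : Tstar = {i | 0 < ustar i - γ * lam i ∧
        ustar i - γ * lam i ≤ Real.sqrt (2 * γ * C)}) :
    Tstar = {i | -Real.sqrt (2 * C / γ) ≤ lam i ∧ lam i < 0} ∧
    (∀ i ∈ Tstar, -Real.sqrt (2 * C / γ) ≤ lam i ∧ lam i < 0) ∧
    (∀ i ∉ Tstar, lam i = 0) := by
  subst hT
  exact ⟨Set.ext (hstat.prox_threshold_iff hγ),
    fun _ hi => hstat.multiplier_mem_of_prox_threshold hγ hi,
    fun _ hi => hstat.multiplier_eq_zero hγ hi⟩

/-- at a P-stationary point,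
`T* = {i : −√(2C/γ) ≤ λ*_i < 0}`; in particular `λ*_i ∈ [−√(2C/γ), 0)` on `T*`
and `λ*_i = 0` off `T*`. -/
theorem PStationary_Tstar_multiplier_characterization {m n : ℕ}
    (x : Fin m → Fin n → ℝ) (y : Fin m → ℝ) (hy : ∀ i, y i = 1 ∨ y i = -1)
    (A : Matrix (Fin m) (Fin n) ℝ) (hA : ∀ i j, A i j = y i * x i j)
    (C : ℝ) (hC : 0 < C) (γ : ℝ) (hγ : 0 < γ)
    (wstar : Fin n → ℝ) (bstar : ℝ) (ustar : Fin m → ℝ) (lam : Fin m → ℝ)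
    (hstat : IsPStationary A y C γ wstar bstar ustar lam)
    (Tstar : Set (Fin m))
    (hT : Tstar = {i | 0 < ustar i - γ * lam i ∧
        ustar i - γ * lam i ≤ Real.sqrt (2 * γ * C)}) :
    Tstar = {i | -Real.sqrt (2 * C / γ) ≤ lam i ∧ lam i < 0} ∧
    (∀ i ∈ Tstar, -Real.sqrt (2 * C / γ) ≤ lam i ∧ lam i < 0) ∧
    (∀ i ∉ Tstar, lam i = 0) :=
  PStationary_Tstar_multiplier_characterization_general y A C γ hγ wstar bstar ustar lam hstat Tstar
    hT
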